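/- Let c ∈ ℂ with c ≠ 4 and c ≠ −4, let A, B, α, β be the associated Loewner parameters for the driving function c√(1−t), and let 0 < s < 1. Suppose g : ℝ → ℂ satisfies g(0) = z and, for every t ∈ [0,s], g(t) ≠ c·√(1−t), g has derivative 2/(g(t) − c·√(1−t)) at t, and both g(t) − A·√(1−t) and g(t) − B·√(1−t) lie outside the slit (−∞, 0]. Then α·Log(g(s) − A·√(1−s)) + β·Log(g(s) − B·√(1−s)) = α·Log(z − A) + β·Log(z − B), where Log is the principal complex logarithm. -/

import Mathlib

/-!
Writing `r = √(1 - t)`, the Loewner equation `g' = 2 / (g - c r)` together with `r' = -1 / (2r)`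
gives `(g - A r)' / (g - A r) = A / (2r (g - c r))`, because `A + B = c` and `A B = 4`. Hence the
derivative of `α Log (g - A r) + β Log (g - B r)` is `(α A + β B) / (2r (g - c r)) = 0`, so this
function is constant on `[0, s]`; the slit-plane hypotheses make `Log` differentiable along the way.
-/

open Complex

namespace Loewner

lemma hasDerivAt_ofReal_sqrt_one_sub {t : ℝ} (ht : t < 1) :
    HasDerivAt (fun u : ℝ => (√(1 - u) : ℂ)) (-(1 / (2 * (√(1 - t) : ℂ)))) t := by
  have hsub : HasDerivAt (fun u : ℝ => 1 - u) (-1) t := by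
    simpa using (hasDerivAt_id t).const_sub 1
  exact ((Real.hasDerivAt_sqrt (sub_pos.2 ht).ne').comp t hsub).ofReal_comp.congr_deriv
    (by push_cast; ring)

lemma hasDerivAt_log_sub_mul_sqrt_one_sub {g : ℝ → ℂ} {g' A : ℂ} {t : ℝ}
    (hg : HasDerivAt g g' t) (ht : t < 1) (hslit : g t - A * √(1 - t) ∈ slitPlane) :
    HasDerivAt (fun u => log (g u - A * √(1 - u)))
      ((g' + A / (2 * √(1 - t))) / (g t - A * √(1 - t))) t := by
  have hlin : HasDerivAt (fun u => g u - A * √(1 - u)) (g' + A / (2 * √(1 - t))) t :=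
    (hg.sub ((hasDerivAt_ofReal_sqrt_one_sub ht).const_mul A)).congr_deriv (by ring)
  exact hlin.clog_real hslit

lemma logDeriv_factor_eq {A B x r : ℂ} (hAB : A * B = 4) (hr : r ≠ 0)
    (hxc : x - (A + B) * r ≠ 0) (hxA : x - A * r ≠ 0) :
    (2 / (x - (A + B) * r) + A / (2 * r)) / (x - A * r) = A / (2 * r * (x - (A + B) * r)) := by
  field_simp
  linear_combination (-r) * hAB

lemma cpow_half_sq (w : ℂ) : (w ^ ((1 : ℂ) / 2)) ^ 2 = w := by
  rw [one_div]
  exact cpow_ofNat_inv_pow w 2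

lemma sq_sub_sixteen_ne_zero {c : ℂ} (hc4 : c ≠ 4) (hc4' : c ≠ -4) : c ^ 2 - 16 ≠ 0 := by
  have hfac : c ^ 2 - 16 = (c - 4) * (c + 4) := by ring
  rw [hfac]
  exact mul_ne_zero (sub_ne_zero.2 hc4) (fun h => hc4' (eq_neg_of_add_eq_zero_left h))

lemma hasDerivAt_firstIntegral_eq_zero {A B α β : ℂ} (hAB : A * B = 4) (hαβ : α * A + β * B = 0)
    {g : ℝ → ℂ} {t : ℝ} (ht : t < 1) (hgc : g t ≠ (A + B) * √(1 - t))
    (hg : HasDerivAt g (2 / (g t - (A + B) * √(1 - t))) t)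
    (hslitA : g t - A * √(1 - t) ∈ slitPlane) (hslitB : g t - B * √(1 - t) ∈ slitPlane) :
    HasDerivAt (fun u => α * log (g u - A * √(1 - u)) + β * log (g u - B * √(1 - u))) 0 t := by
  set r : ℂ := ((√(1 - t) : ℝ) : ℂ)
  have hr : r ≠ 0 := ofReal_ne_zero.2 (Real.sqrt_pos.2 (sub_pos.2 ht)).ne'
  have hxc : g t - (A + B) * r ≠ 0 := sub_ne_zero.2 hgc
  have hderA := hasDerivAt_log_sub_mul_sqrt_one_sub hg ht hslitA
  have hderB := hasDerivAt_log_sub_mul_sqrt_one_sub hg ht hslitB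
  rw [logDeriv_factor_eq hAB hr hxc (slitPlane_ne_zero hslitA)] at hderA
  rw [add_comm A B, logDeriv_factor_eq ((mul_comm B A).trans hAB) hr (by rwa [add_comm])
    (slitPlane_ne_zero hslitB), add_comm B A] at hderB
  refine ((hderA.const_mul α).add (hderB.const_mul β)).congr_deriv ?_
  rw [mul_div_assoc', mul_div_assoc', ← add_div, hαβ, zero_div]

end Loewner

open Loewner in
theorem loewner_implicit_solution_sqrt_one_sub_t
    (c A B α β : ℂ) (hc4 : c ≠ 4) (hc4' : c ≠ -4)
    (hA : A = (c + (c ^ 2 - 16) ^ ((1 : ℂ) / 2)) / 2)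
    (hB : B = (c - (c ^ 2 - 16) ^ ((1 : ℂ) / 2)) / 2)
    (hα : α = (1 - c / (c ^ 2 - 16) ^ ((1 : ℂ) / 2)) / 2)
    (hβ : β = (1 + c / (c ^ 2 - 16) ^ ((1 : ℂ) / 2)) / 2)
    (s : ℝ) (hs0 : 0 < s) (hs1 : s < 1)
    (g : ℝ → ℂ) (z : ℂ) (hg0 : g 0 = z)
    (h : ∀ t ∈ Set.Icc (0 : ℝ) s,
      g t ≠ c * (Real.sqrt (1 - t) : ℂ) ∧
      HasDerivAt g (2 / (g t - c * (Real.sqrt (1 - t) : ℂ))) t ∧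
      (g t - A * (Real.sqrt (1 - t) : ℂ)) ∈ Complex.slitPlane ∧
      (g t - B * (Real.sqrt (1 - t) : ℂ)) ∈ Complex.slitPlane) :
    α * Complex.log (g s - A * (Real.sqrt (1 - s) : ℂ))
      + β * Complex.log (g s - B * (Real.sqrt (1 - s) : ℂ))
      = α * Complex.log (z - A) + β * Complex.log (z - B) := by
  have hd2 := cpow_half_sq (c ^ 2 - 16)
  have hd0 : (c ^ 2 - 16) ^ ((1 : ℂ) / 2) ≠ 0 := fun h0 =>
    sq_sub_sixteen_ne_zero hc4 hc4' (by rw [← hd2, h0]; ring)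
  have hc : c = A + B := by rw [hA, hB]; ring
  have hAB : A * B = 4 := by rw [hA, hB]; linear_combination (-1 / 4 : ℂ) * hd2
  have hαβ : α * A + β * B = 0 := by rw [hα, hβ, hA, hB]; field_simp; ring
  set F : ℝ → ℂ := fun u => α * log (g u - A * √(1 - u)) + β * log (g u - B * √(1 - u))
  have hF : ∀ t ∈ Set.Icc 0 s, HasDerivAt F 0 t := fun t ht => by
    obtain ⟨hgc, hg, hslitA, hslitB⟩ := h t ht
    rw [hc] at hgc hg
    exact hasDerivAt_firstIntegral_eq_zero hAB hαβ (ht.2.trans_lt hs1) hgc hg hslitA hslitB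
  have hconst : F s = F 0 :=
    constant_of_has_deriv_right_zero (fun t ht => (hF t ht).continuousAt.continuousWithinAt)
      (fun t ht => (hF t (Set.Ico_subset_Icc_self ht)).hasDerivWithinAt) s ⟨hs0.le, le_rfl⟩
  simpa [F, hg0] using hconst
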